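/- arXiv:2501.10826 — 5 statements merged into one kernel-verified Lean document; each statement's English description precedes it below -/
import Mathlib

section
/- Let ρ₁,…,ρ_N be distinct complex numbers and define Z(s) = ∏_m (1 − s/ρ_m) with all ρ_m ≠ 0. For s = 1/2 + ε + it not equal to any ρ_m, the angular momentum of t ↦ Z(1/2 + ε + it) (ε fixed) equals |Z(s)|² · Σ_m (1/2 + ε − Re ρ_m)/|ρ_m − s|². -/
/-- Angular momentum of a differentiable curve `ξ : ℝ → ℂ`. -/
noncomputable def angMom (ξ : ℝ → ℂ) (t : ℝ) : ℝ :=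
  (ξ t).re * (deriv ξ t).im - (ξ t).im * (deriv ξ t).re

open Finset Complex in
/-- Third-lemma computation: for `Z(s) = ∏_m (1 − s/ρ_m)`, the angular momentum of
`t ↦ Z(1/2 + ε + it)` equals `|Z(s)|² · Σ_m (1/2 + ε − Re ρ_m)/|ρ_m − s|²`. -/
theorem angMom_finite_product (N : ℕ) (ρ : Fin N → ℂ) (hρ0 : ∀ m, ρ m ≠ 0)
    (hinj : Function.Injective ρ)
    (Z : ℂ → ℂ) (hZ : ∀ s, Z s = ∏ m, (1 - s / ρ m))
    (ε t : ℝ) (hs : ∀ m, (1 / 2 + (ε : ℂ)) + t * Complex.I ≠ ρ m) :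
    angMom (fun t : ℝ => Z ((1 / 2 + (ε : ℂ)) + t * Complex.I)) t
      = ‖Z ((1 / 2 + (ε : ℂ)) + t * Complex.I)‖ ^ 2 *
        ∑ m, (1 / 2 + ε - (ρ m).re) /
          ‖ρ m - ((1 / 2 + (ε : ℂ)) + t * Complex.I)‖ ^ 2 := by
  set c : ℂ := 1 / 2 + (ε : ℂ) with hc
  set s : ℂ := c + t * Complex.I with hsdef
  have hsre : s.re = 1 / 2 + ε := by simp [hsdef, hc]
  have hfac : ∀ m : Fin N, HasDerivAt (fun τ : ℝ => 1 - (c + τ * Complex.I) / ρ m)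
      (-(Complex.I / ρ m)) t := by
    intro m
    have h1 : HasDerivAt (fun τ : ℝ => (τ : ℂ)) 1 t := hasDerivAt_id t |>.ofReal_comp
    have h2 : HasDerivAt (fun τ : ℝ => c + τ * Complex.I) Complex.I t := by
      simpa using (h1.mul_const Complex.I).const_add c
    simpa using ((h2.div_const (ρ m)).const_sub 1)
  have hξ : (fun τ : ℝ => Z (c + τ * Complex.I))
      = fun τ : ℝ => ∏ m, (1 - (c + τ * Complex.I) / ρ m) := by
    funext τ; rw [hZ]
  have hD : HasDerivAt (fun τ : ℝ => Z (c + τ * Complex.I))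
      (∑ m, (∏ j ∈ univ.erase m, (1 - s / ρ j)) • (-(Complex.I / ρ m))) t := by
    rw [hξ]
    exact HasDerivAt.fun_finsetProd (fun m _ => hfac m)
  have hderiv := hD.deriv
  have hZs : Z s = ∏ m, (1 - s / ρ m) := hZ s
  have key : angMom (fun τ : ℝ => Z (c + τ * Complex.I)) t
      = ((starRingEnd ℂ) (Z s) * deriv (fun τ : ℝ => Z (c + τ * Complex.I)) t).im := by
    simp only [angMom, Complex.mul_im, Complex.conj_re, Complex.conj_im]
    ring
  rw [key, hderiv, Finset.mul_sum, Complex.im_sum, Finset.mul_sum]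
  refine Finset.sum_congr rfl fun m _ => ?_
  have hu : ρ m - s ≠ 0 := sub_ne_zero.mpr fun h => hs m h.symm
  have hf : (1 - s / ρ m) * (-Complex.I / (ρ m - s)) = -(Complex.I / ρ m) := by
    field_simp [hρ0 m]
  have hsplit : Z s = (1 - s / ρ m) * ∏ j ∈ univ.erase m, (1 - s / ρ j) := by
    rw [hZs]
    exact (Finset.mul_prod_erase univ _ (Finset.mem_univ m)).symm
  have hterm : (starRingEnd ℂ) (Z s) *
      ((∏ j ∈ univ.erase m, (1 - s / ρ j)) • (-(Complex.I / ρ m)))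
      = ((Complex.normSq (Z s) : ℂ)) * (-Complex.I / (ρ m - s)) := by
    rw [smul_eq_mul, ← hf, Complex.normSq_eq_conj_mul_self]
    rw [hsplit]
    ring
  rw [hterm]
  have him : (((Complex.normSq (Z s) : ℂ)) * (-Complex.I / (ρ m - s))).im
      = Complex.normSq (Z s) * (-(ρ m - s).re / Complex.normSq (ρ m - s)) := by
    simp [Complex.mul_im, Complex.div_im, Complex.div_re]
  rw [him, ← Complex.sq_norm, ← Complex.sq_norm (ρ m - s)]
  rw [Complex.sub_re, hsre]
  ring
end

section
/- Let ρ₁,…,ρ_N be nonzero complex numbers with Re ρ_m = 1/2 for all m, and Z(s) = ∏_m (1 − s/ρ_m). Then for every real t and every real ε with s = 1/2 + ε + it not a zero, the sign of the angular momentum of t ↦ Z(1/2 + ε + it) equals the sign of ε; in particular it is positive for ε > 0 and negative for ε < 0. -/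
open Finset in
/-- Third lemma: if all zeros `ρ_m` lie on the critical line, the sign of the angular
momentum of `t ↦ Z(1/2 + ε + it)` equals the sign of `ε`. -/
theorem sign_angMom_eq_sign_eps (N : ℕ) (hN : 0 < N) (ρ : Fin N → ℂ)
    (hρ0 : ∀ m, ρ m ≠ 0) (hline : ∀ m, (ρ m).re = 1 / 2)
    (Z : ℂ → ℂ) (hZ : ∀ s, Z s = ∏ m, (1 - s / ρ m))
    (ε t : ℝ) (hs : ∀ m, (1 / 2 + (ε : ℂ)) + t * Complex.I ≠ ρ m) :
    Real.sign (angMom (fun t : ℝ => Z ((1 / 2 + (ε : ℂ)) + t * Complex.I)) t)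
      = Real.sign ε ∧
    (0 < ε → 0 < angMom (fun t : ℝ => Z ((1 / 2 + (ε : ℂ)) + t * Complex.I)) t) ∧
    (ε < 0 → angMom (fun t : ℝ => Z ((1 / 2 + (ε : ℂ)) + t * Complex.I)) t < 0) := by
  classical
  have hZfun : Z = fun z => ∏ m, (1 - z / ρ m) := funext hZ
  subst hZfun
  set s : ℂ := (1 / 2 + (ε : ℂ)) + t * Complex.I with hsdef
  have hsρ : ∀ m, s - ρ m ≠ 0 := fun m h => hs m (by rwa [sub_eq_zero] at h)
  have hfne : ∀ m : Fin N, (1 : ℂ) - s / ρ m ≠ 0 := by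
    intro m h
    rw [sub_eq_zero] at h
    exact hsρ m (by rw [sub_eq_zero, (div_eq_one_iff_eq (hρ0 m)).mp h.symm])
  -- derivative of Z at s
  have hDi : ∀ m : Fin N, HasDerivAt (fun z : ℂ => 1 - z / ρ m) (-(ρ m)⁻¹) s := by
    intro m
    simpa [div_eq_mul_inv, one_mul] using
      (((hasDerivAt_id s).div_const (ρ m)).const_sub 1)
  set D : ℂ := ∑ m : Fin N, (∏ k ∈ (univ : Finset (Fin N)).erase m, (1 - s / ρ k)) • (-(ρ m)⁻¹)
    with hDdef
  have hDZ : HasDerivAt (fun z => ∏ m, (1 - z / ρ m)) D s :=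
    HasDerivAt.fun_finsetProd fun i _ => hDi i
  -- derivative of the line
  have hL : HasDerivAt (fun u : ℝ => (1 / 2 + (ε : ℂ)) + u * Complex.I) Complex.I t := by
    simpa using ((Complex.ofRealCLM.hasDerivAt (x := t)).mul_const Complex.I).const_add
      (1 / 2 + (ε : ℂ))
  have hξ : HasDerivAt (fun u : ℝ => ∏ m, ((1 : ℂ) - ((1 / 2 + (ε : ℂ)) + u * Complex.I) / ρ m))
      (Complex.I • D) t := by have := hDZ.scomp t hL; exact this
  have hderiv : deriv (fun u : ℝ => ∏ m, ((1 : ℂ) - ((1 / 2 + (ε : ℂ)) + u * Complex.I) / ρ m)) t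
      = Complex.I * D := by
    rw [hξ.deriv]; simp [smul_eq_mul]
  set Zs : ℂ := ∏ m, (1 - s / ρ m) with hZs
  have hZsne : Zs ≠ 0 := Finset.prod_ne_zero_iff.mpr fun m _ => hfne m
  -- angMom expression
  have hang : angMom (fun u : ℝ => ∏ m, ((1 : ℂ) - ((1 / 2 + (ε : ℂ)) + u * Complex.I) / ρ m)) t
      = ((starRingEnd ℂ) Zs * D).re := by
    unfold angMom
    rw [hderiv]
    simp only [Complex.mul_re, Complex.mul_im, Complex.I_re, Complex.I_im,
      Complex.conj_re, Complex.conj_im]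
    ring
  -- per-term identity
  have hterm : ∀ m : Fin N,
      (starRingEnd ℂ) Zs * ((∏ k ∈ (univ : Finset (Fin N)).erase m, (1 - s / ρ k)) • (-(ρ m)⁻¹))
        = (Complex.normSq Zs : ℂ) * (s - ρ m)⁻¹ := by
    intro m
    have hsplit : Zs = (1 - s / ρ m) * ∏ k ∈ (univ : Finset (Fin N)).erase m, (1 - s / ρ k) := by
      rw [hZs, ← Finset.mul_prod_erase _ _ (Finset.mem_univ m)]
    have hnorm : (starRingEnd ℂ) Zs * Zs = (Complex.normSq Zs : ℂ) := by
      rw [mul_comm, Complex.mul_conj]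
    have hmul : ρ m * (1 - s / ρ m) = ρ m - s := by
      field_simp [hρ0 m]
    have hinv : (1 - s / ρ m)⁻¹ * -(ρ m)⁻¹ = (s - ρ m)⁻¹ := by
      rw [mul_neg, ← mul_inv, mul_comm (1 - s / ρ m) (ρ m), hmul, ← inv_neg, neg_sub]
    have hP : (∏ k ∈ (univ : Finset (Fin N)).erase m, (1 - s / ρ k))
        = Zs * (1 - s / ρ m)⁻¹ :=
      (eq_mul_inv_iff_mul_eq₀ (hfne m)).mpr (by rw [hsplit]; ring)
    calc (starRingEnd ℂ) Zs * ((∏ k ∈ (univ : Finset (Fin N)).erase m, (1 - s / ρ k)) • (-(ρ m)⁻¹))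
        = ((starRingEnd ℂ) Zs * Zs) * ((1 - s / ρ m)⁻¹ * (-(ρ m)⁻¹)) := by
          rw [smul_eq_mul, hP]; ring
      _ = (Complex.normSq Zs : ℂ) * (s - ρ m)⁻¹ := by rw [hnorm, hinv]
  have hre : ∀ m : Fin N, (s - ρ m).re = ε := by
    intro m
    simp [hsdef, Complex.add_re, Complex.sub_re, hline m]
  -- final value
  have hval : ((starRingEnd ℂ) Zs * D).re
      = ε * ∑ m : Fin N, Complex.normSq Zs / Complex.normSq (s - ρ m) := by
    rw [hDdef, Finset.mul_sum]
    rw [Finset.sum_congr rfl fun m _ => hterm m]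
    rw [Complex.re_sum, Finset.mul_sum]
    refine Finset.sum_congr rfl fun m _ => ?_
    rw [Complex.re_ofReal_mul, Complex.inv_re, hre m]
    field_simp
  set C : ℝ := ∑ m : Fin N, Complex.normSq Zs / Complex.normSq (s - ρ m) with hC
  have hCpos : 0 < C := by
    apply Finset.sum_pos
    · intro m _
      exact div_pos (Complex.normSq_pos.mpr hZsne) (Complex.normSq_pos.mpr (hsρ m))
    · exact Finset.univ_nonempty_iff.mpr ⟨⟨0, hN⟩⟩
  rw [hang, hval]
  refine ⟨?_, fun h => mul_pos h hCpos, fun h => mul_neg_of_neg_of_pos h hCpos⟩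
  rcases lt_trichotomy ε 0 with h | h | h
  · rw [Real.sign_of_neg (mul_neg_of_neg_of_pos h hCpos), Real.sign_of_neg h]
  · simp [h]
  · rw [Real.sign_of_pos (mul_pos h hCpos), Real.sign_of_pos h]
end

section
/- Let η : ℂ → ℂ be holomorphic in a neighborhood of the critical line with η(1/2 + it) real for all real t. Writing L(t,ε) for the angular momentum of t ↦ η(1/2 + ε + it) at fixed ε, the ε-derivative of L at ε = 0 equals the determinant det [[η(t), −η'(t)], [η'(t), −η''(t)]] = η'(t)² − η(t)·η''(t), where η(t), η'(t), η''(t) denote the restriction of η and its t-derivatives along the critical line. -/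
open Complex Filter

private lemma hderiv_im {f : ℝ → ℂ} {f' : ℂ} {x : ℝ} (h : HasDerivAt f f' x) :
    HasDerivAt (fun t => (f t).im) f'.im x := by
  have := (Complex.imCLM.hasFDerivAt.comp x h.hasFDerivAt).hasDerivAt
  simp at this
  exact this

private lemma hderiv_re {f : ℝ → ℂ} {f' : ℂ} {x : ℝ} (h : HasDerivAt f f' x) :
    HasDerivAt (fun t => (f t).re) f'.re x := by
  have := (Complex.reCLM.hasFDerivAt.comp x h.hasFDerivAt).hasDerivAt
  simp at this
  exact this

/-- t-direction derivative: for `z = c + t*I`, the map `t' ↦ f (c + t'*I)` has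
derivative `I * deriv f z` at `t`. -/
private lemma hderiv_t {f : ℂ → ℂ} {z : ℂ} (h : HasDerivAt f (deriv f z) z)
    (c : ℂ) (t : ℝ) (hz : z = c + t * I) :
    HasDerivAt (fun t' : ℝ => f (c + t' * I)) (I * deriv f z) t := by
  have hw : HasDerivAt (fun w : ℂ => c + w * I) I (t : ℂ) := by
    simpa using ((hasDerivAt_id (t : ℂ)).mul_const I).const_add c
  have h' : HasDerivAt f (deriv f z) (c + (t : ℂ) * I) := hz ▸ h
  have h1 : HasDerivAt (fun w : ℂ => f (c + w * I)) (deriv f z * I) (t : ℂ) :=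
    h'.comp (t : ℂ) hw
  simpa [mul_comm] using h1.comp_ofReal

/-- ε-direction derivative. -/
private lemma hderiv_eps {f : ℂ → ℂ} {z : ℂ} (h : HasDerivAt f (deriv f z) z)
    (t ε₀ : ℝ) (hz : z = (1 / 2 + (ε₀ : ℂ)) + t * I) :
    HasDerivAt (fun ε : ℝ => f ((1 / 2 + (ε : ℂ)) + t * I)) (deriv f z) ε₀ := by
  have hw : HasDerivAt (fun w : ℂ => (1 / 2 + w) + t * I) 1 (ε₀ : ℂ) := by
    simpa using (((hasDerivAt_id (ε₀ : ℂ)).const_add (1 / 2 : ℂ)).add_const ((t : ℂ) * I))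
  have h' : HasDerivAt f (deriv f z) ((1 / 2 + (ε₀ : ℂ)) + t * I) := hz ▸ h
  have h1 : HasDerivAt (fun w : ℂ => f ((1 / 2 + w) + t * I)) (deriv f z * 1) (ε₀ : ℂ) :=
    h'.comp (ε₀ : ℂ) hw
  simpa using h1.comp_ofReal

/-- For `η` holomorphic near the critical line and real on it, the `ε`-derivative at
`ε = 0` of the angular momentum `L(t,ε)` of `t ↦ η(1/2 + ε + it)` equals
`det [[η, −η'],[η', −η'']] = η'(t)² − η(t)·η''(t)`, where `η(t)` denotes the (real)
restriction of `η` to the critical line. -/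
theorem deriv_angMom_at_zero (η : ℂ → ℂ) (U : Set ℂ) (hU : IsOpen U)
    (hline : {s : ℂ | s.re = 1 / 2} ⊆ U) (hη : DifferentiableOn ℂ η U)
    (hreal : ∀ t : ℝ, (η (1 / 2 + t * Complex.I)).im = 0) (t : ℝ) :
    deriv (fun ε : ℝ =>
        (η ((1 / 2 + (ε : ℂ)) + t * Complex.I)).re *
            deriv (fun t : ℝ => (η ((1 / 2 + (ε : ℂ)) + t * Complex.I)).im) t -
          (η ((1 / 2 + (ε : ℂ)) + t * Complex.I)).im *
            deriv (fun t : ℝ => (η ((1 / 2 + (ε : ℂ)) + t * Complex.I)).re) t) 0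
      = (deriv (fun t : ℝ => (η (1 / 2 + t * Complex.I)).re) t) ^ 2 -
        (η (1 / 2 + t * Complex.I)).re *
          deriv (deriv (fun t : ℝ => (η (1 / 2 + t * Complex.I)).re)) t := by
  have hAn : AnalyticOnNhd ℂ η U := hη.analyticOnNhd hU
  set η1 := deriv η with hη1def
  set η2 := deriv η1 with hη2def
  have hAn1 : AnalyticOnNhd ℂ η1 U := hAn.deriv
  have hD : ∀ z ∈ U, HasDerivAt η (η1 z) z := fun z hz => (hAn z hz).differentiableAt.hasDerivAt
  have hD1 : ∀ z ∈ U, HasDerivAt η1 (η2 z) z := fun z hz =>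
    (hAn1 z hz).differentiableAt.hasDerivAt
  have hmem : ∀ t' : ℝ, ((1 / 2 : ℂ) + t' * I) ∈ U := by
    intro t'
    apply hline
    simp [Complex.ext_iff]
  have h0 : ((1 / 2 + ((0 : ℝ) : ℂ)) + t * I) = (1 / 2 : ℂ) + t * I := by push_cast; ring
  -- eventual membership
  have hev : ∀ᶠ ε : ℝ in nhds 0, ((1 / 2 + (ε : ℂ)) + t * I) ∈ U := by
    have hc : Continuous fun ε : ℝ => (1 / 2 + (ε : ℂ)) + t * I := by continuity
    have : ((1 / 2 + ((0 : ℝ) : ℂ)) + t * I) ∈ U := h0 ▸ hmem t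
    exact hc.continuousAt.preimage_mem_nhds (hU.mem_nhds this)
  set s₀ : ℂ := (1 / 2 : ℂ) + t * I with hs₀
  -- eventual equality of the inner expression
  have hEq : (fun ε : ℝ =>
        (η ((1 / 2 + (ε : ℂ)) + t * I)).re *
            deriv (fun t : ℝ => (η ((1 / 2 + (ε : ℂ)) + t * I)).im) t -
          (η ((1 / 2 + (ε : ℂ)) + t * I)).im *
            deriv (fun t : ℝ => (η ((1 / 2 + (ε : ℂ)) + t * I)).re) t)
      =ᶠ[nhds (0 : ℝ)] fun ε : ℝ =>
        (η ((1 / 2 + (ε : ℂ)) + t * I)).re * (η1 ((1 / 2 + (ε : ℂ)) + t * I)).re +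
          (η ((1 / 2 + (ε : ℂ)) + t * I)).im * (η1 ((1 / 2 + (ε : ℂ)) + t * I)).im := by
    filter_upwards [hev] with ε hε
    have hd := hderiv_t (hD _ hε) (1 / 2 + (ε : ℂ)) t rfl
    have him : deriv (fun t : ℝ => (η ((1 / 2 + (ε : ℂ)) + t * I)).im) t
        = (η1 ((1 / 2 + (ε : ℂ)) + t * I)).re := by
      have := (hderiv_im hd).deriv
      simpa using this
    have hre : deriv (fun t : ℝ => (η ((1 / 2 + (ε : ℂ)) + t * I)).re) t
        = -(η1 ((1 / 2 + (ε : ℂ)) + t * I)).im := by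
      have := (hderiv_re hd).deriv
      simpa using this
    rw [him, hre]; ring
  rw [hEq.deriv_eq]
  -- compute derivative of the RHS function of ε
  have hA : HasDerivAt (fun ε : ℝ => η ((1 / 2 + (ε : ℂ)) + t * I)) (η1 s₀) 0 :=
    hderiv_eps (hD s₀ (hmem t)) t 0 h0.symm
  have hB : HasDerivAt (fun ε : ℝ => η1 ((1 / 2 + (ε : ℂ)) + t * I)) (η2 s₀) 0 :=
    hderiv_eps (hD1 s₀ (hmem t)) t 0 h0.symm
  have hG : HasDerivAt (fun ε : ℝ =>
        (η ((1 / 2 + (ε : ℂ)) + t * I)).re * (η1 ((1 / 2 + (ε : ℂ)) + t * I)).re +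
          (η ((1 / 2 + (ε : ℂ)) + t * I)).im * (η1 ((1 / 2 + (ε : ℂ)) + t * I)).im)
      ((η1 s₀).re * (η1 ((1 / 2 + ((0:ℝ) : ℂ)) + t * I)).re
        + (η ((1 / 2 + ((0:ℝ) : ℂ)) + t * I)).re * (η2 s₀).re
        + ((η1 s₀).im * (η1 ((1 / 2 + ((0:ℝ) : ℂ)) + t * I)).im
          + (η ((1 / 2 + ((0:ℝ) : ℂ)) + t * I)).im * (η2 s₀).im)) 0 :=
    ((hderiv_re hA).mul (hderiv_re hB)).add ((hderiv_im hA).mul (hderiv_im hB))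
  rw [hG.deriv]
  rw [h0]
  -- key vanishing facts
  have him0 : (η s₀).im = 0 := hreal t
  have hre1 : ∀ t' : ℝ, (η1 ((1 / 2 : ℂ) + t' * I)).re = 0 := by
    intro t'
    have hd := hderiv_im (hderiv_t (hD _ (hmem t')) (1 / 2 : ℂ) t' rfl)
    have hz : HasDerivAt (fun t'' : ℝ => (η ((1 / 2 : ℂ) + t'' * I)).im) 0 t' := by
      have : (fun t'' : ℝ => (η ((1 / 2 : ℂ) + t'' * I)).im) = fun _ => (0 : ℝ) := by
        funext t''; exact hreal t''
      rw [this]; exact hasDerivAt_const _ _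
    have := hd.unique hz
    simpa using this
  -- the critical-line derivatives on the RHS of the statement
  have hu' : deriv (fun t' : ℝ => (η ((1 / 2 : ℂ) + t' * I)).re)
      = fun t' : ℝ => -(η1 ((1 / 2 : ℂ) + t' * I)).im := by
    funext t'
    have := (hderiv_re (hderiv_t (hD _ (hmem t')) (1 / 2 : ℂ) t' rfl)).deriv
    simpa using this
  have hu'' : deriv (deriv (fun t' : ℝ => (η ((1 / 2 : ℂ) + t' * I)).re)) t
      = -(η2 s₀).re := by
    rw [hu']
    have := (hderiv_im (hderiv_t (hD1 _ (hmem t)) (1 / 2 : ℂ) t rfl)).neg.deriv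
    simpa [hη2def, hs₀, one_div] using this
  rw [hu'', congrFun hu' t]
  rw [him0, hre1 t]
  ring
end

section
/- Monotonicity equivalence (finite model): let ρ₁,…,ρ_N be nonzero complex numbers with 0 < Re ρ_m < 1, closed under the symmetry ρ ↦ 1 − conj(ρ), and Z(s) = ∏_m (1 − s/ρ_m). Then all ρ_m lie on the critical line Re ρ = 1/2 if and only if for every real t, the function ε ↦ |Z(1/2 + ε + it)|² is nondecreasing on (0, 1/2) and nonincreasing on (−1/2, 0). -/
open Finset

private lemma factor_eq (ρ : ℂ) (hρ0 : ρ ≠ 0) (hre : ρ.re = 1/2) (ε t : ℝ) :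
    ‖1 - ((1/2 + (ε:ℂ)) + t*Complex.I) / ρ‖ ^ 2
      = (ε^2 + (ρ.im - t)^2) / Complex.normSq ρ := by
  have h1 : (1 : ℂ) - ((1/2 + (ε:ℂ)) + t*Complex.I) / ρ
      = (ρ - ((1/2 + (ε:ℂ)) + t*Complex.I)) / ρ := by
    field_simp
  rw [h1, norm_div, div_pow, Complex.sq_norm, Complex.sq_norm]
  congr 1
  simp only [Complex.normSq_apply, Complex.sub_re, Complex.sub_im, Complex.add_re,
    Complex.add_im, Complex.mul_re, Complex.mul_im, Complex.ofReal_re, Complex.ofReal_im,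
    Complex.I_re, Complex.I_im, Complex.one_re, Complex.one_im, hre]
  norm_num
  ring

open Finset in
/-- Monotonicity equivalence (finite model): with zeros in the critical strip closed
under `ρ ↦ 1 − conj ρ`, all zeros lie on the critical line iff for every `t` the map
`ε ↦ |Z(1/2 + ε + it)|²` is nondecreasing on `(0, 1/2)` and nonincreasing on
`(−1/2, 0)`. -/
theorem zeros_on_line_iff_monotone (N : ℕ) (ρ : Fin N → ℂ) (hρ0 : ∀ m, ρ m ≠ 0)
    (hstrip : ∀ m, 0 < (ρ m).re ∧ (ρ m).re < 1)
    (hsym : ∀ m, ∃ m', ρ m' = 1 - (starRingEnd ℂ) (ρ m))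
    (Z : ℂ → ℂ) (hZ : ∀ s, Z s = ∏ m, (1 - s / ρ m)) :
    (∀ m, (ρ m).re = 1 / 2) ↔
      ∀ t : ℝ,
        MonotoneOn (fun ε : ℝ =>
            ‖Z ((1 / 2 + (ε : ℂ)) + t * Complex.I)‖ ^ 2)
          (Set.Ioo (0 : ℝ) (1 / 2)) ∧
        AntitoneOn (fun ε : ℝ =>
            ‖Z ((1 / 2 + (ε : ℂ)) + t * Complex.I)‖ ^ 2)
          (Set.Ioo (-(1 / 2) : ℝ) 0) := by
  constructor
  · intro hline t
    -- rewrite the function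
    have key : ∀ ε : ℝ,
        ‖Z ((1 / 2 + (ε : ℂ)) + t * Complex.I)‖ ^ 2
          = ∏ m, (ε^2 + ((ρ m).im - t)^2) / Complex.normSq (ρ m) := by
      intro ε
      rw [hZ, norm_prod, ← Finset.prod_pow]
      exact Finset.prod_congr rfl fun m _ => factor_eq (ρ m) (hρ0 m) (hline m) ε t
    have mono : ∀ x y : ℝ, 0 ≤ x → x ≤ y →
        ∏ m, (x + ((ρ m).im - t)^2) / Complex.normSq (ρ m)
          ≤ ∏ m, (y + ((ρ m).im - t)^2) / Complex.normSq (ρ m) := by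
      intro x y hx hxy
      apply Finset.prod_le_prod
      · intro m _
        exact div_nonneg (add_nonneg hx (sq_nonneg _)) (Complex.normSq_nonneg _)
      · intro m _
        have hr : 0 < Complex.normSq (ρ m) := Complex.normSq_pos.mpr (hρ0 m)
        exact (div_le_div_iff_of_pos_right hr).mpr (by linarith)
    constructor
    · intro a ha b hb hab
      simp only [key]
      exact mono _ _ (sq_nonneg a) (by nlinarith [ha.1, hb.1])
    · intro a ha b hb hab
      simp only [key]
      exact mono _ _ (sq_nonneg b) (by nlinarith [ha.2, hb.2])
  · intro h m
    by_contra hne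
    set t : ℝ := (ρ m).im with ht
    set ε₀ : ℝ := (ρ m).re - 1/2 with hε₀
    have hε₀ne : ε₀ ≠ 0 := fun h0 => hne (by simp [hε₀] at h0; linarith)
    have hrho : ρ m = (1/2 + (ε₀:ℂ)) + t*Complex.I := by
      apply Complex.ext <;> simp [hε₀, ht]
    have hZ0 : ∀ ε : ℝ, Z ((1 / 2 + (ε : ℂ)) + t * Complex.I) = 0 ↔
        ∃ m', ((1 / 2 + (ε : ℂ)) + t * Complex.I) = ρ m' := by
      intro ε
      rw [hZ, Finset.prod_eq_zero_iff]
      constructor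
      · rintro ⟨m', -, hm'⟩
        refine ⟨m', ?_⟩
        have : ((1 / 2 + (ε : ℂ)) + t * Complex.I) / ρ m' = 1 := by linear_combination -hm'
        exact (div_eq_one_iff_eq (hρ0 m')).mp this
      · rintro ⟨m', hm'⟩
        exact ⟨m', Finset.mem_univ _, by rw [hm', div_self (hρ0 m')]; ring⟩
    have hfρ : Z ((1 / 2 + (ε₀ : ℂ)) + t * Complex.I) = 0 :=
      (hZ0 ε₀).mpr ⟨m, hrho.symm⟩
    -- zeros everywhere on an interval
    have hzero : ∃ S : Set ℝ, S.Infinite ∧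
        ∀ ε ∈ S, Z ((1 / 2 + (ε : ℂ)) + t * Complex.I) = 0 := by
      rcases lt_or_gt_of_ne hε₀ne with hneg | hpos
      · -- ε₀ < 0, ε₀ > -1/2
        have h1 : -(1/2) < ε₀ := by have := (hstrip m).1; simp [hε₀]; linarith
        refine ⟨Set.Ioo ε₀ 0, Set.Ioo_infinite hneg, fun ε hε => ?_⟩
        have hmem : ε ∈ Set.Ioo (-(1/2):ℝ) 0 := ⟨lt_trans h1 hε.1, hε.2⟩
        have hmem0 : ε₀ ∈ Set.Ioo (-(1/2):ℝ) 0 := ⟨h1, hneg⟩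
        have := (h t).2 hmem0 hmem (le_of_lt hε.1)
        simp only [hfρ, map_zero] at this
        have hnn : (0:ℝ) ≤ ‖Z ((1 / 2 + (ε : ℂ)) + t * Complex.I)‖ ^ 2 := by positivity
        have : ‖Z ((1 / 2 + (ε : ℂ)) + t * Complex.I)‖ ^ 2 = 0 := le_antisymm (by simpa using this) hnn
        have := pow_eq_zero_iff (n := 2) (by norm_num) |>.mp this
        exact (norm_eq_zero).mp this
      · have h1 : ε₀ < 1/2 := by have := (hstrip m).2; simp [hε₀]; linarith
        refine ⟨Set.Ioo 0 ε₀, Set.Ioo_infinite hpos, fun ε hε => ?_⟩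
        have hmem : ε ∈ Set.Ioo (0:ℝ) (1/2) := ⟨hε.1, lt_trans hε.2 h1⟩
        have hmem0 : ε₀ ∈ Set.Ioo (0:ℝ) (1/2) := ⟨hpos, h1⟩
        have := (h t).1 hmem hmem0 (le_of_lt hε.2)
        simp only [hfρ, map_zero] at this
        have hnn : (0:ℝ) ≤ ‖Z ((1 / 2 + (ε : ℂ)) + t * Complex.I)‖ ^ 2 := by positivity
        have : ‖Z ((1 / 2 + (ε : ℂ)) + t * Complex.I)‖ ^ 2 = 0 := le_antisymm (by simpa using this) hnn
        have := pow_eq_zero_iff (n := 2) (by norm_num) |>.mp this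
        exact (norm_eq_zero).mp this
    obtain ⟨S, hSinf, hSz⟩ := hzero
    -- map ε ↦ 1/2 + ε + t I is injective into finite range of ρ
    have hinj : Function.Injective (fun ε : ℝ => ((1 / 2 + (ε : ℂ)) + t * Complex.I)) := by
      intro a b hab
      have := congrArg Complex.re hab
      simpa using this
    have hsub : (fun ε : ℝ => ((1 / 2 + (ε : ℂ)) + t * Complex.I)) '' S ⊆ Set.range ρ := by
      rintro _ ⟨ε, hε, rfl⟩
      obtain ⟨m', hm'⟩ := (hZ0 ε).mp (hSz ε hε)
      exact ⟨m', hm'.symm⟩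
    have : ((fun ε : ℝ => ((1 / 2 + (ε : ℂ)) + t * Complex.I)) '' S).Infinite :=
      hSinf.image (hinj.injOn)
    exact this ((Set.finite_range ρ).subset hsub)
end

section
/- For an entire function f with Hadamard-type factorization f(s) = e^{A + Bs} · ∏_{m=1}^N (1 − s/ρ_m)·e^{s/ρ_m} (finitely many nonzero zeros ρ_m, A, B ∈ ℂ) satisfying Re(B) = −Σ_m Re(1/ρ_m), the angular momentum of t ↦ f(1/2 + ε + it) equals |f(s)|²·Σ_m (1/2 + ε − Re ρ_m)/|ρ_m − s|² at every s = 1/2 + ε + it. -/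
open Finset in
private lemma lemA' (ρ s : ℂ) (hρ : ρ ≠ 0) :
    -(1/ρ).re * Complex.normSq (1 - s/ρ)
      + ((starRingEnd ℂ) (1 - s/ρ) * ((1 - s/ρ - 1)/ρ)).re
    = Complex.normSq (1 - s/ρ) * ((s.re - ρ.re) / Complex.normSq (ρ - s)) := by
  have hcρ : (starRingEnd ℂ) ρ ≠ 0 := by simpa using hρ
  have key : (starRingEnd ℂ) (1 - s/ρ) * ((1 - s/ρ - 1)/ρ)
      - ((Complex.normSq (1 - s/ρ) : ℝ) : ℂ)/ρ
      = ((starRingEnd ℂ) s - (starRingEnd ℂ) ρ) / ((Complex.normSq ρ : ℝ) : ℂ) := by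
    rw [Complex.normSq_eq_conj_mul_self, Complex.normSq_eq_conj_mul_self]
    simp only [map_sub, map_div₀, map_one]
    field_simp
    ring
  have hre := congrArg Complex.re key
  simp only [Complex.sub_re, Complex.div_ofReal_re, Complex.conj_re] at hre
  have h1 : (((Complex.normSq (1 - s/ρ) : ℝ) : ℂ)/ρ).re
      = Complex.normSq (1 - s/ρ) * (1/ρ).re := by
    rw [div_eq_mul_inv, Complex.re_ofReal_mul, one_div]
  rw [h1] at hre
  have hu : Complex.normSq (1 - s/ρ) = Complex.normSq (ρ - s) / Complex.normSq ρ := by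
    rw [show (1:ℂ) - s/ρ = (ρ - s)/ρ by field_simp, Complex.normSq_div]
  have hre2 : ((starRingEnd ℂ) (1 - s/ρ) * ((1 - s/ρ - 1)/ρ)).re
      = (s.re - ρ.re)/Complex.normSq ρ + Complex.normSq (1 - s/ρ) * (1/ρ).re := by
    linarith [hre]
  rw [hre2, hu]
  by_cases hρs : ρ = s
  · subst hρs; simp
  · have h2 : Complex.normSq (ρ - s) ≠ 0 := by
      simp [Complex.normSq_eq_zero, sub_eq_zero, hρs]
    have h3 : Complex.normSq ρ ≠ 0 := by simp [Complex.normSq_eq_zero, hρ]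
    field_simp
    ring

open Finset in
private lemma coreSum' (N : ℕ) (ρ : Fin N → ℂ) (hρ0 : ∀ m, ρ m ≠ 0) (s : ℂ) (Bre : ℝ)
    (hB : Bre = -∑ m, (1/ρ m).re) :
    Bre * ∏ m, Complex.normSq ((1 - s/ρ m) * Complex.exp (s/ρ m))
      + ∑ m, (∏ k ∈ univ.erase m, Complex.normSq ((1 - s/ρ k) * Complex.exp (s/ρ k)))
          * ((starRingEnd ℂ) ((1 - s/ρ m) * Complex.exp (s/ρ m)) *
              (-(1/ρ m) * Complex.exp (s/ρ m)
                + (1 - s/ρ m) * (Complex.exp (s/ρ m) * (1/ρ m)))).re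
    = (∏ m, Complex.normSq ((1 - s/ρ m) * Complex.exp (s/ρ m)))
        * ∑ m, (s.re - (ρ m).re) / Complex.normSq (ρ m - s) := by
  subst hB
  rw [neg_mul, Finset.sum_mul, Finset.mul_sum, ← Finset.sum_neg_distrib,
    ← Finset.sum_add_distrib]
  refine Finset.sum_congr rfl fun m _ => ?_
  have hc : ((starRingEnd ℂ) ((1 - s/ρ m) * Complex.exp (s/ρ m)) *
        (-(1/ρ m) * Complex.exp (s/ρ m)
          + (1 - s/ρ m) * (Complex.exp (s/ρ m) * (1/ρ m)))).re
      = Complex.normSq (Complex.exp (s/ρ m)) *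
          ((starRingEnd ℂ) (1 - s/ρ m) * ((1 - s/ρ m - 1)/ρ m)).re := by
    rw [← Complex.re_ofReal_mul]
    congr 1
    rw [map_mul, Complex.normSq_eq_conj_mul_self]
    ring
  rw [hc]
  have hsplit : (∏ k, Complex.normSq ((1 - s/ρ k) * Complex.exp (s/ρ k)))
      = (∏ k ∈ univ.erase m, Complex.normSq ((1 - s/ρ k) * Complex.exp (s/ρ k)))
        * (Complex.normSq (1 - s/ρ m) * Complex.normSq (Complex.exp (s/ρ m))) := by
    rw [← Complex.normSq_mul, Finset.prod_erase_mul _ _ (Finset.mem_univ m)]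
  rw [hsplit]
  linear_combination ((∏ k ∈ univ.erase m, Complex.normSq ((1 - s/ρ k) * Complex.exp (s/ρ k)))
      * Complex.normSq (Complex.exp (s/ρ m))) * lemA' (ρ m) s (hρ0 m)

private lemma angAux' (w z : ℂ) : w.re * (Complex.I * z).im - w.im * (Complex.I * z).re
    = ((starRingEnd ℂ) w * z).re := by
  simp [Complex.mul_re, Complex.mul_im]

open Finset in
/-- For an entire function with Hadamard-type factorization
`f(s) = e^{A + Bs}·∏_m (1 − s/ρ_m)·e^{s/ρ_m}` and `Re(B) = −Σ_m Re(1/ρ_m)`,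
the angular momentum of `t ↦ f(1/2 + ε + it)` equals
`|f(s)|²·Σ_m (1/2 + ε − Re ρ_m)/|ρ_m − s|²`. -/
theorem angMom_hadamard (N : ℕ) (ρ : Fin N → ℂ) (hρ0 : ∀ m, ρ m ≠ 0) (A B : ℂ)
    (hB : B.re = -∑ m, (1 / ρ m).re)
    (f : ℂ → ℂ)
    (hf : ∀ s : ℂ, f s = Complex.exp (A + B * s) *
      ∏ m, ((1 - s / ρ m) * Complex.exp (s / ρ m))) :
    ∀ ε t : ℝ,
      angMom (fun t : ℝ => f ((1 / 2 + (ε : ℂ)) + t * Complex.I)) t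
        = ‖f ((1 / 2 + (ε : ℂ)) + t * Complex.I)‖ ^ 2 *
          ∑ m, (1 / 2 + ε - (ρ m).re) /
            ‖ρ m - ((1 / 2 + (ε : ℂ)) + t * Complex.I)‖ ^ 2 := by
  intro ε t
  set s : ℂ := (1/2 + (ε:ℂ)) + t * Complex.I with hs
  have hsre : (1:ℝ)/2 + ε = s.re := by simp [hs]
  -- the derivative of the curve
  have hg : HasDerivAt (fun x : ℝ => f ((1/2 + (ε:ℂ)) + x * Complex.I))
      (Complex.I * (Complex.exp (A + B * s) * B *
          (∏ m, ((1 - s / ρ m) * Complex.exp (s / ρ m)))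
        + Complex.exp (A + B * s) *
          ∑ m, (∏ k ∈ univ.erase m, ((1 - s / ρ k) * Complex.exp (s / ρ k))) •
            (-(1/ρ m) * Complex.exp (s / ρ m)
              + (1 - s / ρ m) * (Complex.exp (s / ρ m) * (1/ρ m))))) t := by
    have hfun : (fun x : ℝ => f ((1/2 + (ε:ℂ)) + x * Complex.I))
        = fun x : ℝ => Complex.exp (A + B * ((1/2 + (ε:ℂ)) + (x:ℂ) * Complex.I)) *
            ∏ m, ((1 - ((1/2 + (ε:ℂ)) + (x:ℂ) * Complex.I) / ρ m) *
              Complex.exp (((1/2 + (ε:ℂ)) + (x:ℂ) * Complex.I) / ρ m)) := by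
      funext x; rw [hf]
    rw [hfun]
    have hline : HasDerivAt (fun x : ℝ => (1/2 + (ε:ℂ)) + (x:ℂ) * Complex.I)
        Complex.I t := by
      simpa using (Complex.ofRealCLM.hasDerivAt.mul_const Complex.I).const_add (1/2 + (ε:ℂ))
    have hfac : ∀ m : Fin N, HasDerivAt
        (fun z : ℂ => (1 - z / ρ m) * Complex.exp (z / ρ m))
        (-(1/ρ m) * Complex.exp (s / ρ m)
          + (1 - s / ρ m) * (Complex.exp (s / ρ m) * (1/ρ m))) s := by
      intro m
      have h1 : HasDerivAt (fun z : ℂ => 1 - z / ρ m) (-(1/ρ m)) s := by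
        simpa using ((hasDerivAt_id s).div_const (ρ m)).const_sub 1
      have h2 : HasDerivAt (fun z : ℂ => Complex.exp (z / ρ m))
          (Complex.exp (s / ρ m) * (1/ρ m)) s := by
        simpa using ((hasDerivAt_id s).div_const (ρ m)).cexp
      simpa using h1.fun_mul h2
    have hprod := HasDerivAt.fun_finsetProd (u := univ) (fun m _ => hfac m)
    have hE : HasDerivAt (fun z : ℂ => Complex.exp (A + B * z))
        (Complex.exp (A + B * s) * B) s := by
      simpa using (((hasDerivAt_id s).const_mul B).const_add A).cexp
    have hG := hE.fun_mul hprod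
    have hcomp := (hG.hasFDerivAt.restrictScalars ℝ).comp_hasDerivAt t hline
    simpa [mul_comm, Function.comp_def] using hcomp
  rw [angMom, hg.deriv, hf s, angAux']
  -- abbreviations
  set E : ℂ := Complex.exp (A + B * s) with hE
  set P : ℂ := ∏ m, ((1 - s / ρ m) * Complex.exp (s / ρ m)) with hP
  set S : ℂ := ∑ m, (∏ k ∈ univ.erase m, ((1 - s / ρ k) * Complex.exp (s / ρ k))) •
      (-(1/ρ m) * Complex.exp (s / ρ m)
        + (1 - s / ρ m) * (Complex.exp (s / ρ m) * (1/ρ m))) with hS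
  have hPS : (starRingEnd ℂ) P * S
      = ∑ m, ((∏ k ∈ univ.erase m,
            Complex.normSq ((1 - s/ρ k) * Complex.exp (s/ρ k)) : ℝ) : ℂ)
          * ((starRingEnd ℂ) ((1 - s/ρ m) * Complex.exp (s/ρ m)) *
              (-(1/ρ m) * Complex.exp (s / ρ m)
                + (1 - s / ρ m) * (Complex.exp (s / ρ m) * (1/ρ m)))) := by
    rw [hS, Finset.mul_sum]
    refine Finset.sum_congr rfl fun m _ => ?_
    rw [smul_eq_mul, hP, map_prod, ← Finset.prod_erase_mul univ _ (Finset.mem_univ m),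
      Complex.ofReal_prod]
    have hee : (∏ k ∈ univ.erase m,
          ((Complex.normSq ((1 - s/ρ k) * Complex.exp (s/ρ k)) : ℝ) : ℂ))
        = (∏ k ∈ univ.erase m, (starRingEnd ℂ) ((1 - s/ρ k) * Complex.exp (s/ρ k)))
          * ∏ k ∈ univ.erase m, ((1 - s/ρ k) * Complex.exp (s/ρ k)) := by
      rw [← Finset.prod_mul_distrib]
      exact Finset.prod_congr rfl fun k _ => Complex.normSq_eq_conj_mul_self
    rw [hee]
    ring
  have e1 : (starRingEnd ℂ) (E * P) * (E * B * P + E * S)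
      = ((Complex.normSq E : ℝ) : ℂ) * (((Complex.normSq P : ℝ) : ℂ) * B
          + (starRingEnd ℂ) P * S) := by
    rw [Complex.normSq_eq_conj_mul_self, Complex.normSq_eq_conj_mul_self, map_mul]
    ring
  rw [e1, hPS]
  simp only [Complex.re_ofReal_mul, Complex.add_re, Complex.re_sum, Complex.re_ofReal_mul]
  have hnP : Complex.normSq P = ∏ m, Complex.normSq ((1 - s/ρ m) * Complex.exp (s/ρ m)) := by
    rw [hP]; exact map_prod Complex.normSq _ _
  have habs : ‖E * P‖ ^ 2
      = Complex.normSq E * ∏ m, Complex.normSq ((1 - s/ρ m) * Complex.exp (s/ρ m)) := by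
    rw [Complex.sq_norm, Complex.normSq_mul, hnP]
  rw [habs, hnP]
  have hsum : ∀ m : Fin N, (1/2 + ε - (ρ m).re) /
      ‖ρ m - s‖ ^ 2 = (s.re - (ρ m).re) / Complex.normSq (ρ m - s) := by
    intro m; rw [Complex.sq_norm, ← hsre]
  rw [Finset.sum_congr rfl fun m _ => hsum m]
  linear_combination (Complex.normSq E) * coreSum' N ρ hρ0 s B.re hB
end
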